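/- arXiv:2012.01949 — 3 statements merged into one kernel-verified Lean document; each statement's English description precedes it below -/
import Mathlib

section
/- Let two pH-DAEs E_i ż_i = (J_i - R_i) z_i + G_i v_i, y_i = G_iᵀ z_i (i=1,2) be interconnected via [v₁; v₂] = F [y₁; y₂] + [ṽ₁; ṽ₂]. Then the aggregated system E ż = (J - R + G F Gᵀ) z + G ṽ, y = Gᵀ z, with block-diagonal E, J, R, G, is again a pH-DAE (i.e., can be written E ż = (J̃ - R̃) z + G ṽ with J̃ skew-symmetric, R̃ symmetric positive semi-definite) if and only if R - G F_sym Gᵀ is positive semi-definite, where F_sym = (F + Fᵀ)/2. -/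
/-!
A square matrix `M` splits as `J' - R'` with `J'` skew-symmetric and `R'` positive semidefinite
exactly when `-(M + Mᵀ)/2` is positive semidefinite: the splitting is then forced to be
`J' = (M - Mᵀ)/2`, `R' = -(M + Mᵀ)/2`. For `M = J - R + G F Gᵀ` the symmetric part kills `J`,
keeps `-R` and turns `G F Gᵀ` into `G F_sym Gᵀ`, while block-diagonal `E` is positive
semidefinite because its blocks are.
-/

open Matrix

namespace Matrix

variable {m n : Type*}

theorem PosSemidef.fromBlocks_zero [Fintype m] [Fintype n] {R : Type*} [Ring R]
    [PartialOrder R] [StarRing R] [AddLeftMono R] {A : Matrix m m R} {D : Matrix n n R}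
    (hA : A.PosSemidef) (hD : D.PosSemidef) : (fromBlocks A 0 0 D).PosSemidef := by
  refine .of_dotProduct_mulVec_nonneg (hA.1.fromBlocks (by simp) hD.1) fun x => ?_
  rw [fromBlocks_mulVec, dotProduct_block]
  simp only [Sum.elim_comp_inl, Sum.elim_comp_inr, zero_mulVec, add_zero, zero_add]
  exact add_nonneg (hA.dotProduct_mulVec_nonneg _) (hD.dotProduct_mulVec_nonneg _)

theorem fromBlocks_transpose_eq_neg {α : Type*} [AddGroup α] {A : Matrix m m α}
    {D : Matrix n n α} (hA : Aᵀ = -A) (hD : Dᵀ = -D) :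
    (fromBlocks A 0 0 D)ᵀ = -fromBlocks A 0 0 D := by
  simp [fromBlocks_transpose, hA, hD, fromBlocks_neg]

noncomputable def symmPart (M : Matrix n n ℝ) : Matrix n n ℝ := (1 / 2 : ℝ) • (M + Mᵀ)

theorem symmPart_add (M N : Matrix n n ℝ) : symmPart (M + N) = symmPart M + symmPart N := by
  simp only [symmPart, transpose_add]
  module

theorem symmPart_sub (M N : Matrix n n ℝ) : symmPart (M - N) = symmPart M - symmPart N := by
  simp only [symmPart, transpose_sub]
  module

theorem symmPart_eq_zero {M : Matrix n n ℝ} (hM : Mᵀ = -M) : symmPart M = 0 := by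
  simp [symmPart, hM]

theorem symmPart_eq_self {M : Matrix n n ℝ} (hM : M.IsHermitian) : symmPart M = M := by
  rw [symmPart, ← conjTranspose_eq_transpose_of_trivial, hM]
  module

theorem symmPart_mul_mul_transpose [Fintype m] (G : Matrix n m ℝ) (F : Matrix m m ℝ) :
    symmPart (G * F * Gᵀ) = G * symmPart F * Gᵀ := by
  simp only [symmPart, transpose_mul, transpose_transpose, Matrix.mul_smul, Matrix.smul_mul,
    Matrix.mul_add, Matrix.add_mul, Matrix.mul_assoc]

theorem exists_skew_sub_posSemidef_iff [Fintype n] (M : Matrix n n ℝ) :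
    (∃ J R : Matrix n n ℝ, Jᵀ = -J ∧ R.PosSemidef ∧ M = J - R) ↔
      (-symmPart M).PosSemidef := by
  constructor
  · rintro ⟨J, R, hJ, hR, rfl⟩
    rwa [symmPart_sub, symmPart_eq_zero hJ, symmPart_eq_self hR.1, zero_sub, neg_neg]
  · intro h
    refine ⟨(1 / 2 : ℝ) • (M - Mᵀ), -symmPart M, ?_, h, ?_⟩
    · rw [transpose_smul, transpose_sub, transpose_transpose]
      module
    · simp only [symmPart]
      module

end Matrix

/-- Power-conserving interconnection of two pH-DAEs: the aggregated system
`E ż = (J - R + G F Gᵀ) z + G ṽ, y = Gᵀ z` is again a pH-DAE if and only if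
`R - G F_sym Gᵀ` is positive semi-definite. -/
theorem interconnection_pH_iff
    {n₁ n₂ m₁ m₂ : ℕ}
    (E₁ J₁ R₁ : Matrix (Fin n₁) (Fin n₁) ℝ) (G₁ : Matrix (Fin n₁) (Fin m₁) ℝ)
    (E₂ J₂ R₂ : Matrix (Fin n₂) (Fin n₂) ℝ) (G₂ : Matrix (Fin n₂) (Fin m₂) ℝ)
    (hE₁ : E₁.PosSemidef) (hJ₁ : J₁ᵀ = -J₁) (hR₁ : R₁.PosSemidef)
    (hE₂ : E₂.PosSemidef) (hJ₂ : J₂ᵀ = -J₂) (hR₂ : R₂.PosSemidef)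
    (F : Matrix (Fin m₁ ⊕ Fin m₂) (Fin m₁ ⊕ Fin m₂) ℝ) :
    (let E := fromBlocks E₁ 0 0 E₂
     let J := fromBlocks J₁ 0 0 J₂
     let R := fromBlocks R₁ 0 0 R₂
     let G := fromBlocks G₁ 0 0 G₂
     (E.PosSemidef ∧
       ∃ (J' R' : Matrix (Fin n₁ ⊕ Fin n₂) (Fin n₁ ⊕ Fin n₂) ℝ),
         J'ᵀ = -J' ∧ R'.PosSemidef ∧ J - R + G * F * Gᵀ = J' - R') ↔
     (fromBlocks R₁ 0 0 R₂ -
        fromBlocks G₁ 0 0 G₂ * ((1 / 2 : ℝ) • (F + Fᵀ)) *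
          (fromBlocks G₁ 0 0 G₂)ᵀ).PosSemidef) := by
  intro E J R G
  have hJ : Jᵀ = -J := fromBlocks_transpose_eq_neg hJ₁ hJ₂
  have hR : R.IsHermitian := (hR₁.fromBlocks_zero hR₂).isHermitian
  have hsymm : -symmPart (J - R + G * F * Gᵀ) = R - G * symmPart F * Gᵀ := by
    rw [symmPart_add, symmPart_sub, symmPart_eq_zero hJ, symmPart_eq_self hR,
      symmPart_mul_mul_transpose]
    abel
  rw [exists_skew_sub_posSemidef_iff, hsymm]
  exact and_iff_right (hE₁.fromBlocks_zero hE₂)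
end

section
/- The DAE [[0,0,0],[0,K_A,0],[0,0,M_M]] ż = [[0,-K_A,Dᵀ],[K_A,0,0],[-D,0,-K_K]] z + k, with K_A, M_M, K_K symmetric positive definite, has differentiation index 2: equivalently, the matrix pencil λE - A with E = diag(0, K_A, M_M) and A the above matrix is regular, and the nilpotent part of its Weierstraß canonical form has nilpotency index 2 (the index is not ≤ 1, since for a basis V of ker E and W of ker Eᵀ, Wᵀ A V = 0). -/
open Matrix

/-!
Take `λ` with `S = λE - A` invertible and put `N = S⁻¹E`, so that `Nv = w` iff `Sw = Ev`.
Then `ker N = ker E = {(x, 0, 0)}`, and `N²v = 0` iff `Ev = Sw` for some `w ∈ ker E`, which for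
`v = (x, y, z)` says `D y + M_M z = 0`; the vectors `(0, y, -M_M⁻¹ D y)` with `y ≠ 0` show
`ker N ⊊ ker N²`. If `N³v = 0`, then `u = Nv = (a, b, c)` satisfies `K_A b = Dᵀ c` (first block
row of `Su = Ev`) and `D b + M_M c = 0`, so `c ⬝ M_M c = -(b ⬝ K_A b) ≤ 0`; hence `c = 0`, `b = 0`,
`u ∈ ker E` and `N²v = 0`. Regularity holds already at `λ = 0`: `A` is invertible by block
elimination.
-/

namespace Matrix

variable {ι κ K : Type*} [Field K]

theorem rank_eq_rank_of_ker_mulVecLin_eq [Fintype κ] {P Q : Matrix ι κ K}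
    (h : LinearMap.ker P.mulVecLin = LinearMap.ker Q.mulVecLin) : P.rank = Q.rank := by
  have hP := LinearMap.finrank_range_add_finrank_ker P.mulVecLin
  have hQ := LinearMap.finrank_range_add_finrank_ker Q.mulVecLin
  rw [h] at hP
  unfold rank
  omega

theorem rank_lt_rank_of_ker_mulVecLin_lt [Fintype κ] {P Q : Matrix ι κ K}
    (h : LinearMap.ker P.mulVecLin < LinearMap.ker Q.mulVecLin) : Q.rank < P.rank := by
  have hP := LinearMap.finrank_range_add_finrank_ker P.mulVecLin
  have hQ := LinearMap.finrank_range_add_finrank_ker Q.mulVecLin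
  have := Submodule.finrank_lt_finrank_of_lt h
  unfold rank
  omega

variable [Fintype ι]

theorem PosDef.mulVec_eq_zero_iff {R : Type*} [Ring R] [PartialOrder R] [StarRing R]
    {P : Matrix ι ι R} (hP : P.PosDef) {x : ι → R} : P *ᵥ x = 0 ↔ x = 0 := by
  refine ⟨fun h => by_contra fun hx => ?_, fun h => h ▸ mulVec_zero P⟩
  simpa [h] using hP.dotProduct_mulVec_pos hx

theorem eq_zero_of_saddle [Fintype κ] {KA : Matrix ι ι ℝ} {MM : Matrix κ κ ℝ}
    {D : Matrix κ ι ℝ} (hKA : KA.PosSemidef) (hMM : MM.PosDef) {y : ι → ℝ} {z : κ → ℝ}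
    (h₁ : KA *ᵥ y = Dᵀ *ᵥ z) (h₂ : D *ᵥ y + MM *ᵥ z = 0) : z = 0 := by
  by_contra hz
  have hpos : 0 < z ⬝ᵥ MM *ᵥ z := hMM.dotProduct_mulVec_pos hz
  have hnonneg : 0 ≤ y ⬝ᵥ KA *ᵥ y := hKA.dotProduct_mulVec_nonneg y
  have : z ⬝ᵥ MM *ᵥ z = -(y ⬝ᵥ KA *ᵥ y) := calc
    z ⬝ᵥ MM *ᵥ z = -(z ⬝ᵥ D *ᵥ y) := by rw [eq_neg_of_add_eq_zero_right h₂, dotProduct_neg]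
    _ = -(y ⬝ᵥ KA *ᵥ y) := by rw [dotProduct_mulVec, ← mulVec_transpose, ← h₁, dotProduct_comm]
  linarith

variable [DecidableEq ι]

theorem rank_sq_eq_rank_pow_three {N : Matrix ι ι K}
    (h : ∀ v, N *ᵥ (N *ᵥ (N *ᵥ v)) = 0 → N *ᵥ (N *ᵥ v) = 0) :
    (N ^ 2).rank = (N ^ 3).rank := by
  refine rank_eq_rank_of_ker_mulVecLin_eq (le_antisymm (fun v hv => ?_) fun v hv => ?_) <;>
    simp only [LinearMap.mem_ker, mulVecLin_apply, pow_succ, pow_zero, one_mul,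
      ← mulVec_mulVec] at hv ⊢
  · rw [hv, mulVec_zero]
  · exact h v hv

theorem rank_sq_lt_rank {N : Matrix ι ι K} {v : ι → K} (h₂ : N *ᵥ (N *ᵥ v) = 0)
    (h₁ : N *ᵥ v ≠ 0) : (N ^ 2).rank < N.rank := by
  refine rank_lt_rank_of_ker_mulVecLin_lt (lt_of_le_of_ne (fun w hw => ?_) fun h => h₁ ?_)
  · simp only [LinearMap.mem_ker, mulVecLin_apply, sq, ← mulVec_mulVec] at hw ⊢
    rw [hw, mulVec_zero]
  · have : v ∈ LinearMap.ker (N ^ 2).mulVecLin := by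
      simpa only [LinearMap.mem_ker, mulVecLin_apply, sq, ← mulVec_mulVec] using h₂
    rwa [← h, LinearMap.mem_ker, mulVecLin_apply] at this

variable {S E : Matrix ι ι K}

theorem inv_mul_mulVec_eq_iff (hS : IsUnit S) {v w : ι → K} :
    (S⁻¹ * E) *ᵥ v = w ↔ S *ᵥ w = E *ᵥ v := by
  have hS' : IsUnit S.det := (isUnit_iff_isUnit_det S).1 hS
  rw [← mulVec_mulVec]
  constructor
  · rintro rfl
    rw [mulVec_mulVec, mul_nonsing_inv _ hS', one_mulVec]
  · intro h
    rw [← h, mulVec_mulVec, nonsing_inv_mul _ hS', one_mulVec]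

theorem inv_mul_mulVec_eq_zero_iff (hS : IsUnit S) {v : ι → K} :
    (S⁻¹ * E) *ᵥ v = 0 ↔ E *ᵥ v = 0 := by
  rw [inv_mul_mulVec_eq_iff hS, mulVec_zero, eq_comm]

theorem inv_mul_mulVec_inv_mul_mulVec_eq_zero_iff (hS : IsUnit S) {v : ι → K} :
    (S⁻¹ * E) *ᵥ ((S⁻¹ * E) *ᵥ v) = 0 ↔ ∃ w, E *ᵥ w = 0 ∧ S *ᵥ w = E *ᵥ v := by
  rw [inv_mul_mulVec_eq_zero_iff hS]
  constructor
  · exact fun h => ⟨_, h, (inv_mul_mulVec_eq_iff hS).1 rfl⟩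
  · rintro ⟨w, hw, hSw⟩
    rwa [(inv_mul_mulVec_eq_iff hS).2 hSw]

end Matrix

theorem Sum.exists_eq_elim_elim {α β γ R : Type*} (v : α ⊕ β ⊕ γ → R) :
    ∃ x y z, v = x ⊕ᵥ (y ⊕ᵥ z) :=
  ⟨_, _, _, by rw [Sum.elim_comp_inl_inr, Sum.elim_comp_inl_inr]⟩

namespace QuasistaticPencil

variable {ι κ : Type*} [Fintype ι] [Fintype κ]
  (KA : Matrix ι ι ℝ) (MM KK : Matrix κ κ ℝ) (D : Matrix κ ι ℝ)

def E : Matrix (ι ⊕ ι ⊕ κ) (ι ⊕ ι ⊕ κ) ℝ := fromBlocks 0 0 0 (fromBlocks KA 0 0 MM)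

def A : Matrix (ι ⊕ ι ⊕ κ) (ι ⊕ ι ⊕ κ) ℝ :=
  fromBlocks 0 (fromCols (-KA) Dᵀ) (fromRows KA (-D)) (fromBlocks 0 0 0 (-KK))

theorem E_mulVec (x y : ι → ℝ) (z : κ → ℝ) :
    E KA MM *ᵥ (x ⊕ᵥ (y ⊕ᵥ z)) = (0 : ι → ℝ) ⊕ᵥ (KA *ᵥ y ⊕ᵥ MM *ᵥ z) := by
  simp [E, fromBlocks_mulVec]

theorem A_mulVec (x y : ι → ℝ) (z : κ → ℝ) :
    A KA KK D *ᵥ (x ⊕ᵥ (y ⊕ᵥ z)) =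
      (Dᵀ *ᵥ z - KA *ᵥ y) ⊕ᵥ (KA *ᵥ x ⊕ᵥ (-(D *ᵥ x) - KK *ᵥ z)) := by
  ext (i | i | i) <;> simp [A, fromBlocks_mulVec, neg_mulVec] <;> ring

theorem pencil_mulVec (lam : ℝ) (x y : ι → ℝ) (z : κ → ℝ) :
    (lam • E KA MM - A KA KK D) *ᵥ (x ⊕ᵥ (y ⊕ᵥ z)) =
      (KA *ᵥ y - Dᵀ *ᵥ z) ⊕ᵥ
        ((lam • KA *ᵥ y - KA *ᵥ x) ⊕ᵥ (lam • MM *ᵥ z + (D *ᵥ x + KK *ᵥ z))) := by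
  rw [sub_mulVec, smul_mulVec, E_mulVec, A_mulVec]
  ext (i | i | i) <;> simp
  ring

variable {KA MM KK D}

theorem E_mulVec_eq_zero_iff (hKA : KA.PosDef) (hMM : MM.PosDef) (x y : ι → ℝ) (z : κ → ℝ) :
    E KA MM *ᵥ (x ⊕ᵥ (y ⊕ᵥ z)) = 0 ↔ y = 0 ∧ z = 0 := by
  rw [E_mulVec, ← Sum.elim_zero_zero, ← Sum.elim_zero_zero, Sum.elim_eq_iff, Sum.elim_eq_iff,
    hKA.mulVec_eq_zero_iff, hMM.mulVec_eq_zero_iff]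
  simp

theorem det_A_ne_zero [DecidableEq ι] [DecidableEq κ] (hKA : KA.PosDef) (hKK : KK.PosDef) :
    (A KA KK D).det ≠ 0 := by
  intro hdet
  obtain ⟨v, hv0, hv⟩ := exists_mulVec_eq_zero_iff.2 hdet
  obtain ⟨x, y, z, rfl⟩ := Sum.exists_eq_elim_elim v
  simp only [A_mulVec, ← Sum.elim_zero_zero, Sum.elim_eq_iff] at hv
  obtain ⟨hy, hx, hz⟩ := hv
  rw [hKA.mulVec_eq_zero_iff] at hx
  rw [hx, mulVec_zero, neg_zero, zero_sub, neg_eq_zero, hKK.mulVec_eq_zero_iff] at hz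
  rw [hz, mulVec_zero, zero_sub, neg_eq_zero, hKA.mulVec_eq_zero_iff] at hy
  simp [hx, hy, hz] at hv0

theorem transpose_fromRows_one_zero_mul_A_mul [DecidableEq ι] :
    (fromRows (1 : Matrix ι ι ℝ) (0 : Matrix (ι ⊕ κ) ι ℝ))ᵀ * A KA KK D *
      fromRows (1 : Matrix ι ι ℝ) (0 : Matrix (ι ⊕ κ) ι ℝ) = 0 := by
  rw [transpose_fromRows, Matrix.mul_assoc, A, fromBlocks_mul_fromRows]
  simp [fromCols_mul_fromRows]

variable [DecidableEq ι] [DecidableEq κ]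

variable (KA MM KK D) in
noncomputable def N (lam : ℝ) : Matrix (ι ⊕ ι ⊕ κ) (ι ⊕ ι ⊕ κ) ℝ :=
  (lam • E KA MM - A KA KK D)⁻¹ * E KA MM

variable {lam : ℝ}

theorem sq_mulVec_eq_zero_iff (hKA : KA.PosDef) (hMM : MM.PosDef)
    (hS : IsUnit (lam • E KA MM - A KA KK D)) (x y : ι → ℝ) (z : κ → ℝ) :
    N KA MM KK D lam *ᵥ (N KA MM KK D lam *ᵥ (x ⊕ᵥ (y ⊕ᵥ z))) = 0 ↔
      D *ᵥ y + MM *ᵥ z = 0 := by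
  rw [N, inv_mul_mulVec_inv_mul_mulVec_eq_zero_iff hS]
  constructor
  · rintro ⟨w, hEw, hSw⟩
    obtain ⟨a, b, c, rfl⟩ := Sum.exists_eq_elim_elim w
    obtain ⟨rfl, rfl⟩ := (E_mulVec_eq_zero_iff hKA hMM a b c).1 hEw
    simp only [pencil_mulVec, E_mulVec, Sum.elim_eq_iff, mulVec_zero, smul_zero] at hSw
    obtain ⟨-, ha, hc⟩ := hSw
    have hay : a + y = 0 := by
      rw [← hKA.mulVec_eq_zero_iff, mulVec_add, ← ha]
      abel
    rw [← hc, zero_add, add_zero, ← mulVec_add, add_comm, hay, mulVec_zero]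
  · intro h
    refine ⟨(-y) ⊕ᵥ ((0 : ι → ℝ) ⊕ᵥ (0 : κ → ℝ)),
      (E_mulVec_eq_zero_iff hKA hMM _ _ _).2 ⟨rfl, rfl⟩, ?_⟩
    rw [pencil_mulVec, E_mulVec]
    simp [mulVec_neg, eq_neg_of_add_eq_zero_right h]

theorem sq_mulVec_eq_zero_of_cube_mulVec_eq_zero (hKA : KA.PosDef) (hMM : MM.PosDef)
    (hS : IsUnit (lam • E KA MM - A KA KK D)) (v : ι ⊕ ι ⊕ κ → ℝ)
    (hv : N KA MM KK D lam *ᵥ (N KA MM KK D lam *ᵥ (N KA MM KK D lam *ᵥ v)) = 0) :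
    N KA MM KK D lam *ᵥ (N KA MM KK D lam *ᵥ v) = 0 := by
  obtain ⟨x, y, z, rfl⟩ := Sum.exists_eq_elim_elim v
  obtain ⟨a, b, c, hu⟩ := Sum.exists_eq_elim_elim (N KA MM KK D lam *ᵥ (x ⊕ᵥ (y ⊕ᵥ z)))
  have hSu := (inv_mul_mulVec_eq_iff hS).1 hu
  rw [pencil_mulVec, E_mulVec, Sum.elim_eq_iff] at hSu
  rw [hu, sq_mulVec_eq_zero_iff hKA hMM hS] at hv
  have hc : c = 0 := eq_zero_of_saddle hKA.posSemidef hMM (sub_eq_zero.1 hSu.1) hv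
  rw [hc, mulVec_zero, sub_zero, hKA.mulVec_eq_zero_iff] at hSu
  rw [hu, N, inv_mul_mulVec_eq_zero_iff hS, E_mulVec_eq_zero_iff hKA hMM]
  exact ⟨hSu.1, hc⟩

theorem exists_sq_mulVec_eq_zero_and_mulVec_ne_zero [Nonempty ι] (hKA : KA.PosDef)
    (hMM : MM.PosDef) (hS : IsUnit (lam • E KA MM - A KA KK D)) :
    ∃ v, N KA MM KK D lam *ᵥ (N KA MM KK D lam *ᵥ v) = 0 ∧ N KA MM KK D lam *ᵥ v ≠ 0 := by
  obtain ⟨y, hy⟩ := exists_ne (0 : ι → ℝ)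
  refine ⟨0 ⊕ᵥ (y ⊕ᵥ -(MM⁻¹ *ᵥ D *ᵥ y)), (sq_mulVec_eq_zero_iff hKA hMM hS _ _ _).2 ?_, ?_⟩
  · rw [mulVec_neg, mulVec_mulVec, mul_nonsing_inv _ (MM.isUnit_iff_isUnit_det.1 hMM.isUnit),
      one_mulVec, add_neg_cancel]
  · rw [Ne, N, inv_mul_mulVec_eq_zero_iff hS, E_mulVec_eq_zero_iff hKA hMM]
    exact fun h => hy h.1

end QuasistaticPencil

open QuasistaticPencil in
/-- The pencil `(E, A)` of the semi-discretized quasi-static poroelastic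
system is regular and has differentiation index exactly 2: (i) the pencil is
regular; (ii) with `V = W` spanning `ker E = ker Eᵀ`, one has `Wᵀ A V = 0`
(so the index is at least 2); (iii) the nilpotent part of `(λE - A)⁻¹ E`
stabilizes after two steps but not after one, i.e. the index is exactly 2. -/
theorem quasistatic_pencil_index_two
    {n m : ℕ} (hn : 0 < n) (KA : Matrix (Fin n) (Fin n) ℝ)
    (MM KK : Matrix (Fin m) (Fin m) ℝ) (D : Matrix (Fin m) (Fin n) ℝ)
    (hKA : KA.PosDef) (hMM : MM.PosDef) (hKK : KK.PosDef) :
    (let E : Matrix (Fin n ⊕ (Fin n ⊕ Fin m)) (Fin n ⊕ (Fin n ⊕ Fin m)) ℝ :=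
       fromBlocks 0 0 0 (fromBlocks KA 0 0 MM)
     let A : Matrix (Fin n ⊕ (Fin n ⊕ Fin m)) (Fin n ⊕ (Fin n ⊕ Fin m)) ℝ :=
       fromBlocks 0 (fromCols (-KA) Dᵀ) (fromRows KA (-D))
         (fromBlocks 0 0 0 (-KK))
     let V : Matrix (Fin n ⊕ (Fin n ⊕ Fin m)) (Fin n) ℝ :=
       fromRows 1 0
     (∃ lam : ℝ, (lam • E - A).det ≠ 0) ∧
     Vᵀ * A * V = 0 ∧
     (∀ lam : ℝ, (lam • E - A).det ≠ 0 →
       (((lam • E - A)⁻¹ * E) ^ 2).rank = (((lam • E - A)⁻¹ * E) ^ 3).rank ∧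
       (((lam • E - A)⁻¹ * E) ^ 2).rank < ((lam • E - A)⁻¹ * E).rank)) := by
  intro E A V
  have : Nonempty (Fin n) := ⟨⟨0, hn⟩⟩
  refine ⟨⟨0, ?_⟩, transpose_fromRows_one_zero_mul_A_mul, fun lam hdet => ?_⟩
  · rw [zero_smul, zero_sub, det_neg]
    exact mul_ne_zero (pow_ne_zero _ (by norm_num)) (det_A_ne_zero hKA hKK)
  · have hS : IsUnit (lam • E - A) := (isUnit_iff_isUnit_det _).2 hdet.isUnit
    obtain ⟨v, h₂, h₁⟩ := exists_sq_mulVec_eq_zero_and_mulVec_ne_zero hKA hMM hS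
    exact ⟨rank_sq_eq_rank_pow_three (sq_mulVec_eq_zero_of_cube_mulVec_eq_zero hKA hMM hS),
      rank_sq_lt_rank h₂ h₁⟩
end

section
/- The closed-loop matrix pencil (E, A_F) with E = blockdiag(0, K_A, M_M) and A_F = [[Mᵤᵀ F₁₁ Mᵤ, -K_A, Dᵀ],[K_A, 0, 0],[-D, 0, -K_K]] has differentiation index 1 whenever F₁₁ is nonsingular and Mᵤ is nonsingular: i.e., with V and W bases of ker E and ker Eᵀ respectively, Wᵀ A_F V is invertible. -/
open Matrix

theorem Matrix.fromRows_one_zero_transpose_mul_fromBlocks_mul_fromRows_one_zero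
    {l o R : Type*} [Fintype l] [Fintype o] [DecidableEq l] [Semiring R]
    (A : Matrix l l R) (B : Matrix l o R) (C : Matrix o l R) (D : Matrix o o R) :
    (fromRows (1 : Matrix l l R) (0 : Matrix o l R))ᵀ * fromBlocks A B C D *
      (fromRows 1 0 : Matrix (l ⊕ o) l R) = A := by
  rw [transpose_fromRows, fromCols_mul_fromBlocks, fromCols_mul_fromRows]
  simp

theorem Matrix.isUnit_det_transpose_mul_mul
    {l R : Type*} [Fintype l] [DecidableEq l] [CommRing R] {P F : Matrix l l R}
    (hP : IsUnit P.det) (hF : IsUnit F.det) : IsUnit (Pᵀ * F * P).det := by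
  rw [det_mul, det_mul, det_transpose]
  exact (hP.mul hF).mul hP

theorem closed_loop_pencil_index_one_general
    {n m : ℕ} (KA : Matrix (Fin n) (Fin n) ℝ)
    (KK : Matrix (Fin m) (Fin m) ℝ) (D : Matrix (Fin m) (Fin n) ℝ)
    (Mu F11 : Matrix (Fin n) (Fin n) ℝ)
    (hMu : IsUnit Mu.det) (hF11 : IsUnit F11.det) :
    (let AF : Matrix (Fin n ⊕ (Fin n ⊕ Fin m)) (Fin n ⊕ (Fin n ⊕ Fin m)) ℝ :=
       fromBlocks (Muᵀ * F11 * Mu) (fromCols (-KA) Dᵀ)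
         (fromRows KA (-D)) (fromBlocks 0 0 0 (-KK))
     let V : Matrix (Fin n ⊕ (Fin n ⊕ Fin m)) (Fin n) ℝ := fromRows 1 0
     Vᵀ * AF * V = Muᵀ * F11 * Mu ∧ IsUnit (Vᵀ * AF * V).det) := by
  have hcompress := fromRows_one_zero_transpose_mul_fromBlocks_mul_fromRows_one_zero
    (Muᵀ * F11 * Mu) (fromCols (-KA) Dᵀ) (fromRows KA (-D)) (fromBlocks 0 0 0 (-KK))
  refine ⟨hcompress, ?_⟩
  rw [hcompress]
  exact isUnit_det_transpose_mul_mul hMu hF11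

/-- The closed-loop pencil `(E, A_F)` has differentiation index 1 whenever
`F₁₁` and `Mᵤ` are nonsingular: with `V = W` spanning `ker E = ker Eᵀ`, the
matrix `Wᵀ A_F V = Mᵤᵀ F₁₁ Mᵤ` is invertible. -/
theorem closed_loop_pencil_index_one
    {n m : ℕ} (KA : Matrix (Fin n) (Fin n) ℝ)
    (MM KK : Matrix (Fin m) (Fin m) ℝ) (D : Matrix (Fin m) (Fin n) ℝ)
    (Mu F11 : Matrix (Fin n) (Fin n) ℝ)
    (hKA : KA.PosDef) (hMM : MM.PosDef) (hKK : KK.PosDef)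
    (hMu : IsUnit Mu.det) (hF11 : IsUnit F11.det) :
    (let AF : Matrix (Fin n ⊕ (Fin n ⊕ Fin m)) (Fin n ⊕ (Fin n ⊕ Fin m)) ℝ :=
       fromBlocks (Muᵀ * F11 * Mu) (fromCols (-KA) Dᵀ)
         (fromRows KA (-D)) (fromBlocks 0 0 0 (-KK))
     let V : Matrix (Fin n ⊕ (Fin n ⊕ Fin m)) (Fin n) ℝ := fromRows 1 0
     Vᵀ * AF * V = Muᵀ * F11 * Mu ∧ IsUnit (Vᵀ * AF * V).det) :=
  closed_loop_pencil_index_one_general KA KK D Mu F11 hMu hF11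
end
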